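/- arXiv:2102.10444 — 11 statements merged into one kernel-verified Lean document; each statement's English description precedes it below -/
import Mathlib

section
/- If X is a topological space such that for every topological space Y the projection π_Y : X × Y → Y is a closed map, then X is compact. -/
theorem stmt_1 {X : Type u} [TopologicalSpace X]
    (h : ∀ (Y : Type u) [TopologicalSpace Y], IsClosedMap (Prod.snd : X × Y → Y)) :
    CompactSpace X := by
  refine (isProperMap_const_iff (PUnit.unit : PUnit.{u + 1})).mp ?_
  refine isProperMap_iff_universally_closed.mpr ⟨continuous_const, fun Y _ => ?_⟩
  -- `Prod.map (fun _ => ()) id : X × Y → PUnit × Y` is `Prod.snd` followed by `Y ≃ₜ PUnit × Y`.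
  exact (Homeomorph.punitProd Y).symm.isClosedMap.comp (h Y)
end

section
/- Let κ be a limit ordinal and let X = ∏_{α<κ} X_α be a product of topological spaces. Suppose that for each β with 0 < β < κ, the projection from ∏_{α≤β} X_α onto ∏_{α<β} X_α is a closed map. Then for each β < κ, the projection from X onto ∏_{α<β} X_α is a closed map. -/
/-!
Let `A ⊆ ∏_{i ∈ t} π i` be closed and `y` a point of the closure of its projection to `s`.
Call a point defined on a lower set `D ⊆ t` admissible if it lies in the closure of the
projection of `A` to `D`. Admissible points are ordered by extension, and a chain is bounded by
the gluing of its members: membership in a closure in a product is decided by finitely many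
coordinates, and finitely many coordinates of the union already lie in one member of the chain.
Zorn gives a maximal admissible extension of `y`. If its domain `D` were not all of `t`, then
`D = Iio γ` for the least `γ ∈ t \ D`; since the projection from `Iic γ` to `Iio γ` is closed,
the closure of the projection of `A` to `Iio γ` is contained in the image of the closure of its
projection to `Iic γ`, which yields a strictly larger admissible point. Hence the domain is `t`,
and as `A` is closed the maximal point lies in `A` and projects to `y`.
-/

open Set Filter Topology

section

variable {ι : Type*} {π : ι → Type*} [∀ i, TopologicalSpace (π i)]

theorem image_domRestrict₂_closure_subset {s u t : Set ι} (hsu : s ⊆ u) (hut : u ⊆ t)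
    (A : Set (∀ i : t, π i)) :
    domRestrict₂ hsu '' closure (domRestrict₂ hut '' A) ⊆
      closure (domRestrict₂ (hsu.trans hut) '' A) := by
  rw [← domRestrict₂_comp_domRestrict₂ hsu hut, image_comp]
  exact image_closure_subset_closure_image (Pi.continuous_domRestrict₂ hsu)

theorem closure_image_domRestrict₂_subset_of_isClosedMap {s u t : Set ι} (hsu : s ⊆ u)
    (hut : u ⊆ t) (hcl : IsClosedMap (domRestrict₂ (π := π) hsu)) (A : Set (∀ i : t, π i)) :
    closure (domRestrict₂ (hsu.trans hut) '' A) ⊆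
      domRestrict₂ hsu '' closure (domRestrict₂ hut '' A) := by
  refine closure_minimal ?_ (hcl _ isClosed_closure)
  rw [← domRestrict₂_comp_domRestrict₂ hsu hut, image_comp]
  exact image_mono subset_closure

theorem mem_closure_image_domRestrict₂_iff {s t : Set ι} (hst : s ⊆ t)
    {A : Set (∀ i : t, π i)} {z : ∀ i : s, π i} :
    z ∈ closure (domRestrict₂ hst '' A) ↔
      ∀ F (hFs : F ⊆ s), F.Finite →
        domRestrict₂ hFs z ∈ closure (domRestrict₂ (hFs.trans hst) '' A) := by
  refine ⟨fun hz F hFs _ => image_domRestrict₂_closure_subset hFs hst A ⟨z, hz, rfl⟩, fun H => ?_⟩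
  rw [mem_closure_iff_nhds]
  intro U hU
  rw [nhds_pi, Filter.mem_pi] at hU
  obtain ⟨I, hI, V, hV, hIU⟩ := hU
  have hF : Subtype.val '' I ⊆ s := by rintro _ ⟨i, -, rfl⟩; exact i.2
  have : Finite (Subtype.val '' I) := (hI.image _).to_subtype
  obtain ⟨_, hgV, a, haA, rfl⟩ := mem_closure_iff_nhds.mp (H _ hF (hI.image _))
    (univ.pi fun j => V ⟨j, hF j.2⟩) (set_pi_mem_nhds (toFinite _) fun j _ => hV _)
  refine ⟨domRestrict₂ hst a, hIU fun i hi => ?_, a, haA, rfl⟩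
  exact hgV ⟨i, mem_image_of_mem _ hi⟩ trivial

theorem IsLowerSet.eq_Iio_of_minimal_diff [LinearOrder ι] {D t : Set ι} {γ : ι}
    (hD : IsLowerSet D) (ht : IsLowerSet t) (hγ : Minimal (· ∈ t \ D) γ) : D = Iio γ := by
  refine Subset.antisymm (fun a ha => not_le.mp fun hγa => hγ.prop.2 (hD hγa ha)) fun a ha => ?_
  by_contra haD
  exact (not_le.mpr ha) (hγ.le_of_le ⟨ht (le_of_lt ha) hγ.prop.1, haD⟩ (le_of_lt ha))

structure PartialPoint [LE ι] (t : Set ι) (A : Set (∀ i : t, π i)) where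
  dom : Set ι
  isLowerSet_dom : IsLowerSet dom
  dom_subset : dom ⊆ t
  val : ∀ i : dom, π i
  val_mem_closure : val ∈ closure (domRestrict₂ dom_subset '' A)

namespace PartialPoint

section LE

variable [LE ι] {t : Set ι} {A : Set (∀ i : t, π i)}

instance : Preorder (PartialPoint t A) where
  le p q := ∃ h : p.dom ⊆ q.dom, domRestrict₂ h q.val = p.val
  le_refl p := ⟨subset_rfl, rfl⟩
  le_trans _ _ _ := fun ⟨hpq, e₁⟩ ⟨hqr, e₂⟩ => ⟨hpq.trans hqr, by rw [← e₁, ← e₂]; rfl⟩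

theorem dom_mono {p q : PartialPoint t A} (h : p ≤ q) : p.dom ⊆ q.dom := h.1

theorem val_eq_of_le {p q : PartialPoint t A} (h : p ≤ q) (i : ι) (hi : i ∈ p.dom) :
    q.val ⟨i, h.1 hi⟩ = p.val ⟨i, hi⟩ :=
  congrFun h.2 ⟨i, hi⟩

theorem val_eq_of_isChain {c : Set (PartialPoint t A)} (hc : IsChain (· ≤ ·) c) {p q}
    (hp : p ∈ c) (hq : q ∈ c) (i : ι) (hip : i ∈ p.dom) (hiq : i ∈ q.dom) :
    p.val ⟨i, hip⟩ = q.val ⟨i, hiq⟩ := by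
  rcases hc.total hp hq with h | h
  · exact (val_eq_of_le h i hip).symm
  · exact val_eq_of_le h i hiq

theorem bddAbove_of_isChain {c : Set (PartialPoint t A)} (hc : IsChain (· ≤ ·) c)
    (hne : c.Nonempty) : BddAbove c := by
  set D := ⋃ p ∈ c, p.dom
  have hD : ∀ i : D, ∃ p ∈ c, i.1 ∈ p.dom := fun i => by
    simpa only [D, mem_iUnion, exists_prop] using i.2
  choose P hPc hPi using hD
  let z : ∀ i : D, π i := fun i => (P i).val ⟨i, hPi i⟩
  have hz : ∀ p (hp : p ∈ c) (i : ι) (hi : i ∈ p.dom),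
      z ⟨i, mem_biUnion hp hi⟩ = p.val ⟨i, hi⟩ :=
    fun p hp i hi => val_eq_of_isChain hc (hPc _) hp i _ hi
  have hDt : D ⊆ t := iUnion₂_subset fun p _ => p.dom_subset
  have hzA : z ∈ closure (domRestrict₂ hDt '' A) := by
    refine (mem_closure_image_domRestrict₂_iff hDt).mpr fun F hFD hF => ?_
    obtain ⟨p, hp, hFp⟩ := (hc.directedOn.mono' fun _ _ _ _ h => dom_mono h)
      |>.exists_mem_subset_of_finset_subset_biUnion hne (s := hF.toFinset) (by simpa using hFD)
    rw [hF.coe_toFinset] at hFp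
    have hzp : domRestrict₂ hFD z = domRestrict₂ hFp p.val := funext fun i => hz p hp i _
    rw [hzp]
    exact (mem_closure_image_domRestrict₂_iff _).mp p.val_mem_closure F hFp hF
  exact ⟨⟨D, isLowerSet_iUnion₂ fun p _ => p.isLowerSet_dom, hDt, z, hzA⟩,
    fun p hp => ⟨subset_biUnion_of_mem hp, funext fun i => hz p hp i i.2⟩⟩

theorem exists_le_dom_eq (p : PartialPoint t A) {u : Set ι} (hu : IsLowerSet u)
    (hpu : p.dom ⊆ u) (hut : u ⊆ t) (hcl : IsClosedMap (domRestrict₂ (π := π) hpu)) :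
    ∃ q : PartialPoint t A, p ≤ q ∧ q.dom = u := by
  obtain ⟨z, hz, hzp⟩ :=
    closure_image_domRestrict₂_subset_of_isClosedMap hpu hut hcl A p.val_mem_closure
  exact ⟨⟨u, hu, hut, z, hz⟩, ⟨hpu, hzp⟩, rfl⟩

theorem exists_mem_eq_val_of_dom_eq (hA : IsClosed A) (p : PartialPoint t A) (hp : p.dom = t) :
    ∃ a ∈ A, ∀ i (hi : i ∈ p.dom), a ⟨i, p.dom_subset hi⟩ = p.val ⟨i, hi⟩ := by
  cases p with | mk D _ hDt z hz =>
  dsimp only at hp ⊢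
  subst hp
  rw [show domRestrict₂ hDt = id from rfl, image_id, hA.closure_eq] at hz
  exact ⟨z, hz, fun _ _ => rfl⟩

end LE

theorem dom_eq_of_isMax [LinearOrder ι] [WellFoundedLT ι] {t : Set ι}
    {A : Set (∀ i : t, π i)} (ht : IsLowerSet t)
    (h : ∀ γ ∈ t, IsClosedMap (domRestrict₂ (π := π) (Iio_subset_Iic_self : Iio γ ⊆ Iic γ)))
    {m : PartialPoint t A} (hm : IsMax m) : m.dom = t := by
  by_contra hne
  obtain ⟨γ, hγ⟩ := exists_minimal_of_wellFoundedLT (· ∈ t \ m.dom)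
    (nonempty_of_ssubset (ssubset_of_subset_of_ne m.dom_subset hne))
  have hdom : m.dom = Iio γ := m.isLowerSet_dom.eq_Iio_of_minimal_diff ht hγ
  have hcl : ∀ D (hD : D = Iio γ) (hDγ : D ⊆ Iic γ),
      IsClosedMap (domRestrict₂ (π := π) hDγ) := by
    rintro _ rfl _
    exact h γ hγ.prop.1
  obtain ⟨q, hmq, hq⟩ := m.exists_le_dom_eq (isLowerSet_Iic γ) (hdom ▸ Iio_subset_Iic_self)
    (ht.Iic_subset hγ.prop.1) (hcl _ hdom _)
  have hγm : γ ∈ m.dom := dom_mono (hm hmq) (hq ▸ self_mem_Iic)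
  exact hγ.prop.2 hγm

end PartialPoint

theorem isClosedMap_domRestrict₂_of_isClosedMap_Iio_Iic [LinearOrder ι] [WellFoundedLT ι]
    {s t : Set ι} (hs : IsLowerSet s) (ht : IsLowerSet t) (hst : s ⊆ t)
    (h : ∀ γ ∈ t, IsClosedMap (domRestrict₂ (π := π) (Iio_subset_Iic_self : Iio γ ⊆ Iic γ))) :
    IsClosedMap (domRestrict₂ (π := π) hst) := by
  intro A hA
  refine isClosed_of_closure_subset fun y hy => ?_
  let p : PartialPoint t A := ⟨s, hs, hst, y, hy⟩
  obtain ⟨m, hpm, hm⟩ := zorn_le_nonempty_Ici₀ p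
    (fun c _ hc q hq => PartialPoint.bddAbove_of_isChain hc ⟨q, hq⟩) p le_rfl
  obtain ⟨hsm, hmy⟩ := hpm
  obtain ⟨a, haA, ham⟩ :=
    m.exists_mem_eq_val_of_dom_eq hA (PartialPoint.dom_eq_of_isMax ht h hm)
  exact ⟨a, haA, (funext fun i => ham i.1 (hsm i.2)).trans hmy⟩

end

theorem stmt_4_general (κ : Ordinal) (X : Ordinal → Type*)
    [∀ α, TopologicalSpace (X α)]
    (h : ∀ β : Ordinal, 0 < β → β < κ →
      IsClosedMap (X := ∀ α : Set.Iic β, X α.1) (Y := ∀ a : Set.Iio β, X a.1)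
        (fun f a => f ⟨a.1, Set.mem_Iic.mpr (Set.mem_Iio.mp a.2).le⟩)) :
    ∀ β : Ordinal, ∀ hβ : β < κ,
      IsClosedMap (X := ∀ α : Set.Iio κ, X α.1) (Y := ∀ a : Set.Iio β, X a.1)
        (fun f a => f ⟨a.1, a.2.trans hβ⟩) := by
  intro β hβ
  refine isClosedMap_domRestrict₂_of_isClosedMap_Iio_Iic (isLowerSet_Iio β) (isLowerSet_Iio κ)
    (Iio_subset_Iio hβ.le) fun γ hγ => ?_
  rcases eq_zero_or_pos γ with rfl | hγ₀
  · -- the product over `Iio 0` is a point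
    exact fun C _ => isClosed_discrete _
  · exact h γ hγ₀ hγ

theorem stmt_4 (κ : Ordinal) (hκ : Order.IsSuccLimit κ) (X : Ordinal → Type*)
    [∀ α, TopologicalSpace (X α)]
    (h : ∀ β : Ordinal, 0 < β → β < κ →
      IsClosedMap (X := ∀ α : Set.Iic β, X α.1) (Y := ∀ a : Set.Iio β, X a.1)
        (fun f a => f ⟨a.1, Set.mem_Iic.mpr (Set.mem_Iio.mp a.2).le⟩)) :
    ∀ β : Ordinal, ∀ hβ : β < κ,
      IsClosedMap (X := ∀ α : Set.Iio κ, X α.1) (Y := ∀ a : Set.Iio β, X a.1)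
        (fun f a => f ⟨a.1, a.2.trans hβ⟩) :=
  stmt_4_general κ X h
end

section
/- Let R be a class of topological spaces and let P = {X : for every Y ∈ R, the projection X × Y → Y is closed}, Q = P ∩ R. If X ∈ P and Y ∈ Q, then X × Y ∈ P. -/
theorem IsClosedMap.snd_prod_assoc {X Y Z : Type*} [TopologicalSpace X] [TopologicalSpace Y]
    [TopologicalSpace Z] (hXYZ : IsClosedMap (Prod.snd : X × (Y × Z) → Y × Z))
    (hYZ : IsClosedMap (Prod.snd : Y × Z → Z)) :
    IsClosedMap (Prod.snd : (X × Y) × Z → Z) :=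
  hYZ.comp (hXYZ.comp (Homeomorph.prodAssoc X Y Z).isClosedMap)

theorem stmt_7 (R : Set TopCat.{u})
    (hR : ∀ Y Z : TopCat.{u}, Y ∈ R → Z ∈ R → TopCat.of (↑Y × ↑Z) ∈ R)
    (X Y : TopCat.{u})
    (hX : ∀ Z ∈ R, IsClosedMap (Prod.snd : ↑X × ↑Z → ↑Z))
    (hYP : ∀ Z ∈ R, IsClosedMap (Prod.snd : ↑Y × ↑Z → ↑Z)) (hYR : Y ∈ R) :
    ∀ Z ∈ R, IsClosedMap (Prod.snd : (↑X × ↑Y) × ↑Z → ↑Z) := by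
  intro Z hZ
  exact (hX (TopCat.of (Y × Z)) (hR Y Z hYR hZ)).snd_prod_assoc (hYP Z hZ)
end

section
/- Let κ be an infinite cardinal, R a class of topological spaces closed under products of fewer than κ factors, P = {X : for each Y ∈ R the projection X × Y → Y is closed}, and Q = P ∩ R. If X = ∏_{α∈A} X_α with each X_α ∈ Q and |A| < κ, then X ∈ Q. -/
/-!
Well-order the index set. For each `a`, the space `(∏_{b<a} X_b) × Z` is (homeomorphic to) a
product of fewer than `κ` members of `R`, so the projection
`X_a × ((∏_{b<a} X_b) × Z) → (∏_{b<a} X_b) × Z` is closed. Given a closed `C ⊆ (∏ X_a) × Z` and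
`z` in the closure of its projection, choose `g a` by transfinite recursion so that
`(g a, g|_{<a}, z)` lies in the closure of the image of `C`; closedness of the projection makes
this possible as long as `(g|_{<a}, z)` lies in the closure of the image of `C`. That invariant
survives limit stages because a basic open set of a product constrains only finitely many
coordinates, and at the end of the recursion it says `(g, z) ∈ C`.
-/

open Set Topology Filter

theorem exists_pi_forall_domRestrict_Iio {A : Type*} [LinearOrder A] [WellFoundedLT A]
    {X : A → Type*} (P : ∀ a, (∀ b : Iio a, X b) → X a → Prop) (hP : ∀ a h, ∃ v, P a h v) :
    ∃ g : ∀ a, X a, ∀ a, P a ((Iio a).domRestrict g) (g a) := by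
  choose f hf using hP
  let g : ∀ a, X a := wellFounded_lt.fix fun a rec => f a fun b => rec b b.2
  have hg : ∀ a, g a = f a ((Iio a).domRestrict g) := wellFounded_lt.fix_eq _
  exact ⟨g, fun a => hg a ▸ hf a _⟩

theorem isClosedMap_snd_of_homeomorph {X Y Y' : Type*} [TopologicalSpace X]
    [TopologicalSpace Y] [TopologicalSpace Y'] (e : Y ≃ₜ Y')
    (h : IsClosedMap (Prod.snd : X × Y → Y)) : IsClosedMap (Prod.snd : X × Y' → Y') :=
  have hsnd : (Prod.snd : X × Y' → Y') = e ∘ Prod.snd ∘ (Homeomorph.refl X).prodCongr e.symm := by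
    ext p
    simp
  hsnd ▸ e.isClosedMap.comp (h.comp ((Homeomorph.refl X).prodCongr e.symm).isClosedMap)

namespace PiProd

variable {A : Type*} {X : A → Type*} {Z : Type*}

abbrev restrictProd (s : Set A) : (∀ a, X a) × Z → (∀ b : s, X b) × Z :=
  Prod.map s.domRestrict id

theorem restrictProd_eq_restrictProd_iff {s : Set A} {p q : (∀ a, X a) × Z} :
    restrictProd s p = restrictProd s q ↔ (∀ b ∈ s, p.1 b = q.1 b) ∧ p.2 = q.2 := by
  simp [Prod.ext_iff, funext_iff]

def cylinder (C : Set ((∀ a, X a) × Z)) (s : Set A) : Set ((∀ a, X a) × Z) :=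
  restrictProd s ⁻¹' (restrictProd s '' C)

variable {C : Set ((∀ a, X a) × Z)}

theorem mem_cylinder_iff {s : Set A} {p : (∀ a, X a) × Z} :
    p ∈ cylinder C s ↔ ∃ q ∈ C, (∀ b ∈ s, q.1 b = p.1 b) ∧ q.2 = p.2 := by
  simp only [cylinder, mem_preimage, mem_image, restrictProd_eq_restrictProd_iff]

theorem cylinder_anti {s s' : Set A} (h : s' ⊆ s) : cylinder C s ⊆ cylinder C s' := by
  simp only [subset_def, mem_cylinder_iff]
  exact fun p ⟨q, hqC, hqp, hq2⟩ => ⟨q, hqC, fun b hb => hqp b (h hb), hq2⟩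

theorem cylinder_univ : cylinder C univ = C := by
  ext p
  simp only [mem_cylinder_iff, mem_univ, forall_const, ← funext_iff, ← Prod.ext_iff]
  simp

variable [∀ a, TopologicalSpace (X a)] [TopologicalSpace Z]

theorem continuous_restrictProd (s : Set A) :
    Continuous (restrictProd (X := X) (Z := Z) s) :=
  (Pi.continuous_domRestrict s).prodMap continuous_id

theorem mem_closure_cylinder_empty (g : ∀ a, X a) {z : Z} (hz : z ∈ closure (Prod.snd '' C)) :
    (g, z) ∈ closure (cylinder C ∅) := by
  refine map_mem_closure (Continuous.prodMk_right g) hz ?_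
  rintro _ ⟨q, hqC, rfl⟩
  exact mem_cylinder_iff.2 ⟨q, hqC, fun _ => False.elim, rfl⟩

theorem mem_closure_cylinder_of_forall_finset {s : Set A} {p : (∀ a, X a) × Z}
    (h : ∀ t : Finset A, ↑t ⊆ s → p ∈ closure (cylinder C t)) :
    p ∈ closure (cylinder C s) := by
  classical
  rw [mem_closure_iff_nhds]
  intro U hU
  rw [nhds_prod_eq, nhds_pi] at hU
  obtain ⟨u, hu, v, hv, huv⟩ := mem_prod_iff.1 hU
  obtain ⟨I, t, ht, hIt⟩ := mem_pi'.1 hu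
  have hbox : (I : Set A).pi t ×ˢ v ∈ 𝓝 p := by
    rw [nhds_prod_eq]
    exact prod_mem_prod (set_pi_mem_nhds I.finite_toSet fun b _ => ht b) hv
  obtain ⟨r, ⟨hr, hrv⟩, hrC⟩ := mem_closure_iff_nhds.1
    (h (I.filter (· ∈ s)) fun b hb => (Finset.mem_filter.1 hb).2) _ hbox
  obtain ⟨q, hqC, hqr, hq2⟩ := mem_cylinder_iff.1 hrC
  refine ⟨(s.piecewise q.1 r.1, r.2), huv ⟨hIt fun b hb => ?_, hrv⟩,
    mem_cylinder_iff.2 ⟨q, hqC, fun b hb => (piecewise_eq_of_mem _ _ _ hb).symm, hq2⟩⟩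
  change s.piecewise q.1 r.1 b ∈ t b
  by_cases hbs : b ∈ s
  · rw [piecewise_eq_of_mem _ _ _ hbs, hqr b (by simpa using ⟨hb, hbs⟩)]
    exact hr b hb
  · rw [piecewise_eq_of_notMem _ _ _ hbs]
    exact hr b hb

theorem mem_closure_cylinder_of_forall_Iic [LinearOrder A] {s : Set A} {p : (∀ a, X a) × Z}
    (h₀ : p ∈ closure (cylinder C ∅)) (h : ∀ b ∈ s, p ∈ closure (cylinder C (Iic b))) :
    p ∈ closure (cylinder C s) := by
  refine mem_closure_cylinder_of_forall_finset fun t hts => ?_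
  rcases t.eq_empty_or_nonempty with rfl | ht
  · simpa using h₀
  · exact closure_mono (cylinder_anti fun b hb => t.le_max' b hb) (h _ (hts (t.max'_mem ht)))

def splitAt (a : A) (s : Set A) (q : (∀ a, X a) × Z) : X a × ((∀ b : s, X b) × Z) :=
  (q.1 a, restrictProd s q)

theorem exists_mem_closure_splitAt {a : A} {s : Set A} {p : (∀ a, X a) × Z}
    (hcl : IsClosedMap (Prod.snd : X a × ((∀ b : s, X b) × Z) → (∀ b : s, X b) × Z))
    (hp : p ∈ closure (cylinder C s)) :
    ∃ v, (v, restrictProd s p) ∈ closure (splitAt a s '' C) := by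
  have hsnd : restrictProd s p ∈ closure (Prod.snd '' (splitAt a s '' C)) := by
    rw [image_image]
    exact map_mem_closure (continuous_restrictProd s) hp fun _ hq => hq
  obtain ⟨⟨v, w⟩, hvw, rfl⟩ := hcl.closure_image_subset _ hsnd
  exact ⟨v, hvw⟩

theorem mem_closure_cylinder_insert {a : A} {s : Set A} {p : (∀ a, X a) × Z}
    (hp : splitAt a s p ∈ closure (splitAt a s '' C)) :
    p ∈ closure (cylinder C (insert a s)) := by
  classical
  let extend (x : X a × ((∀ b : s, X b) × Z)) : (∀ a, X a) × Z :=
    (Function.update (fun b => if hb : b ∈ s then x.2.1 ⟨b, hb⟩ else p.1 b) a x.1, x.2.2)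
  have hcont : Continuous extend := by
    refine .prodMk (.update (continuous_pi fun b => ?_) a continuous_fst) (by fun_prop)
    split_ifs
    exacts [(continuous_apply _).comp (continuous_fst.comp continuous_snd), continuous_const]
  have hp_eq : extend (splitAt a s p) = p := by
    ext b
    · rcases eq_or_ne b a with rfl | hba
      · simp [extend, splitAt]
      · simp [extend, splitAt, hba]
    · rfl
  rw [← hp_eq]
  refine map_mem_closure hcont hp ?_
  rintro _ ⟨q, hqC, rfl⟩
  refine mem_cylinder_iff.2 ⟨q, hqC, fun b hb => ?_, rfl⟩
  rcases eq_or_ne b a with rfl | hba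
  · simp [extend, splitAt]
  · simp [extend, splitAt, hba, hb.resolve_left hba]

end PiProd

open PiProd in
theorem isClosedMap_snd_pi_of_wellFoundedLT {A : Type*} [LinearOrder A] [WellFoundedLT A]
    {X : A → Type*} [∀ a, TopologicalSpace (X a)] {Z : Type*} [TopologicalSpace Z]
    (h : ∀ a, IsClosedMap (Prod.snd : X a × ((∀ b : Iio a, X b) × Z) → (∀ b : Iio a, X b) × Z)) :
    IsClosedMap (Prod.snd : (∀ a, X a) × Z → Z) := by
  intro C hC
  refine isClosed_of_closure_subset fun z hz => ?_
  obtain ⟨c, hc⟩ : C.Nonempty := image_nonempty.1 (closure_nonempty_iff.1 ⟨z, hz⟩)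
  obtain ⟨g, hg⟩ := exists_pi_forall_domRestrict_Iio (X := X)
    (fun a w v => (∃ v', (v', w, z) ∈ closure (splitAt a (Iio a) '' C)) →
      (v, w, z) ∈ closure (splitAt a (Iio a) '' C))
    fun a _ => ⟨@Classical.epsilon _ ⟨c.1 a⟩ _, Classical.epsilon_spec⟩
  have h₀ := mem_closure_cylinder_empty g hz
  have hIic : ∀ a, (g, z) ∈ closure (cylinder C (Iic a)) := by
    intro a
    induction a using WellFoundedLT.induction with
    | _ a ih =>
      rw [← Iio_insert]
      exact mem_closure_cylinder_insert
        (hg a (exists_mem_closure_splitAt (h a) (mem_closure_cylinder_of_forall_Iic h₀ ih)))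
  have hmem : (g, z) ∈ closure (cylinder C univ) :=
    mem_closure_cylinder_of_forall_Iic h₀ fun a _ => hIic a
  rw [cylinder_univ, hC.closure_eq] at hmem
  exact ⟨_, hmem, rfl⟩

theorem stmt_9 (κ : Cardinal.{u}) (hκ : Cardinal.aleph0 ≤ κ) (R : Set TopCat.{u})
    (hR : ∀ (ι : Type u) (Y : ι → TopCat.{u}), Cardinal.mk ι < κ →
      (∀ i, Y i ∈ R) → TopCat.of (∀ i, ↑(Y i)) ∈ R)
    (A : Type u) (X : A → TopCat.{u})
    (hXP : ∀ a, ∀ Z ∈ R, IsClosedMap (Prod.snd : ↑(X a) × ↑Z → ↑Z))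
    (hXR : ∀ a, X a ∈ R) (hA : Cardinal.mk A < κ) :
    (∀ Z ∈ R, IsClosedMap (Prod.snd : (∀ a, ↑(X a)) × ↑Z → ↑Z)) ∧
      TopCat.of (∀ a, ↑(X a)) ∈ R := by
  refine ⟨fun Z hZ => ?_, hR A X hA hXR⟩
  obtain ⟨_, _⟩ := exists_wellFoundedLT A
  refine isClosedMap_snd_pi_of_wellFoundedLT fun a => ?_
  have hcard : Cardinal.mk (Iio a ⊕ PUnit.{u + 1}) < κ :=
    calc Cardinal.mk (Iio a ⊕ PUnit.{u + 1}) = Cardinal.mk (Iio a) + 1 := by simp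
      _ ≤ Cardinal.mk A + 1 := by gcongr; exact Cardinal.mk_set_le _
      _ < κ := Cardinal.add_lt_of_lt hκ hA (Cardinal.one_lt_aleph0.trans_le hκ)
  have hW : TopCat.of (∀ i, ↑(Sum.elim (fun b : Iio a => X b) (fun _ : PUnit => Z) i)) ∈ R :=
    hR _ _ hcard (Sum.forall.2 ⟨fun b => hXR b, fun _ => hZ⟩)
  exact isClosedMap_snd_of_homeomorph ((Homeomorph.sumPiEquivProdPi _ _ _).trans
    ((Homeomorph.refl _).prodCongr (Homeomorph.piUnique _))) (hXP a _ hW)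
end

section
/- Let κ be an infinite cardinal, R a class of topological spaces closed under products of fewer than κ factors, P = {X : for each Y ∈ R the projection X × Y → Y is closed}, and Q = P ∩ R. If X = ∏_{α∈A} X_α with each X_α ∈ Q and |A| = κ, then X ∈ P. -/
/-!
Let `C ⊆ (∏ a, X a) × Z` be closed and `z` in the closure of its projection. Well-order `A` with
order type the initial ordinal of `κ` and choose the coordinates of a point `x` with `(x, z) ∈ C`
one at a time, keeping `(x|_{<a}, z)` in the closure of the image of `C` in `∏_{b<a} X b × Z`.
That product has fewer than `κ` factors, so it lies in `R`, and closedness of the projection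
`X a × ∏_{b<a} X b × Z → ∏_{b<a} X b × Z` supplies the next coordinate. Limit stages cost nothing,
since a basic neighbourhood constrains only finitely many coordinates; Zorn's lemma packages the
transfinite recursion.
-/

universe u

open Set Filter Topology

def Homeomorph.piOptionEquivProd {ι : Type*} (Y : Option ι → Type*) [∀ i, TopologicalSpace (Y i)] :
    (∀ i, Y i) ≃ₜ Y none × ∀ i, Y (some i) where
  toEquiv := Equiv.piOptionEquivProd
  continuous_toFun := by dsimp [Equiv.piOptionEquivProd]; fun_prop
  continuous_invFun := continuous_pi fun i => by
    cases i with
    | none => exact continuous_fst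
    | some i => exact (continuous_apply i).comp continuous_snd

theorem IsClosedMap.snd_of_homeomorph {W Y Y' : Type*} [TopologicalSpace W] [TopologicalSpace Y]
    [TopologicalSpace Y'] (e : Y ≃ₜ Y') (h : IsClosedMap (Prod.snd : W × Y → Y)) :
    IsClosedMap (Prod.snd : W × Y' → Y') := by
  have : (Prod.snd : W × Y' → Y') = e ∘ Prod.snd ∘ (Homeomorph.refl W).prodCongr e.symm := by
    ext; simp
  rw [this]
  exact e.isClosedMap.comp (h.comp (Homeomorph.isClosedMap _))

theorem Filter.neBot_comap_nhds_inf_principal_iff {α β : Type*} [TopologicalSpace β] {f : α → β}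
    {y : β} {C : Set α} : (comap f (𝓝 y) ⊓ 𝓟 C).NeBot ↔ y ∈ closure (f '' C) := by
  rw [inf_principal_neBot_iff, mem_closure_iff_nhds]
  constructor
  · intro h t ht
    obtain ⟨c, hct, hcC⟩ := h (f ⁻¹' t) (preimage_mem_comap ht)
    exact ⟨f c, hct, c, hcC, rfl⟩
  · rintro h U ⟨t, ht, htU⟩
    obtain ⟨_, hyt, c, hcC, rfl⟩ := h t ht
    exact ⟨c, htU hyt, hcC⟩

theorem exists_range_eq_of_injOn_fst {A : Type*} {X : A → Type*} {G : Set (Σ a, X a)}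
    (hG : InjOn Sigma.fst G) :
    ∃ x : ∀ b : Sigma.fst '' G, X b,
      range (fun b : Sigma.fst '' G => (⟨b, x b⟩ : Σ a, X a)) = G := by
  have : ∀ b : Sigma.fst '' G, ∃ v, (⟨b, v⟩ : Σ a, X a) ∈ G := fun ⟨_, p, hp, rfl⟩ => ⟨p.2, hp⟩
  choose x hx using this
  refine ⟨x, subset_antisymm (range_subset_iff.2 hx) fun p hp => ?_⟩
  exact ⟨⟨p.1, p, hp, rfl⟩, hG (hx _) hp rfl⟩

section PartialLift

variable {A : Type*} {X : A → Type*} [∀ a, TopologicalSpace (X a)] {Z : Type*} [TopologicalSpace Z]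

def sectionNhds (G : Set (Σ a, X a)) : Filter (∀ a, X a) :=
  ⨅ p ∈ G, comap (fun x => x p.1) (𝓝 p.2)

theorem sectionNhds_antitone : Antitone (sectionNhds (X := X)) :=
  fun _ _ h => biInf_mono h

theorem sectionNhds_empty : sectionNhds (∅ : Set (Σ a, X a)) = ⊤ := iInf_emptyset

theorem sectionNhds_insert (p : Σ a, X a) (G : Set (Σ a, X a)) :
    sectionNhds (insert p G) = comap (fun x => x p.1) (𝓝 p.2) ⊓ sectionNhds G := iInf_insert

theorem sectionNhds_le_nhds {G : Set (Σ a, X a)} {x : ∀ a, X a} (hx : ∀ a, ⟨a, x a⟩ ∈ G) :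
    sectionNhds G ≤ 𝓝 x := by
  rw [nhds_pi, Filter.pi]
  exact le_iInf fun a =>
    biInf_le (fun p : Σ a, X a => comap (fun x : ∀ a, X a => x p.1) (𝓝 p.2)) (hx a)

theorem sectionNhds_range {s : Set A} (x : ∀ b : s, X b) :
    sectionNhds (range fun b : s => (⟨b, x b⟩ : Σ a, X a)) = comap s.domRestrict (𝓝 x) := by
  rw [sectionNhds, iInf_range, nhds_pi, Filter.pi, comap_iInf]
  simp only [comap_comap]
  rfl

variable (r : A → A → Prop) (C : Set ((∀ a, X a) × Z)) (z : Z)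

/-- `G` is the graph of a partial point `x` of `∀ a, X a`, defined on an `r`-initial segment, such
that `(x, z)` lies in the closure of `C` as seen through the coordinates in the domain of `x`. -/
structure IsPartialLift (G : Set (Σ a, X a)) : Prop where
  injOn_fst : InjOn Sigma.fst G
  mem_of_rel : ∀ p ∈ G, ∀ b, r b p.1 → b ∈ Sigma.fst '' G
  neBot : (sectionNhds G ×ˢ 𝓝 z ⊓ 𝓟 C).NeBot

variable {r C z}

theorem isPartialLift_empty (hz : z ∈ closure (Prod.snd '' C)) : IsPartialLift r C z ∅ where
  injOn_fst := injOn_empty _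
  mem_of_rel := by simp
  neBot := by
    rwa [sectionNhds_empty, top_prod, neBot_comap_nhds_inf_principal_iff]

theorem IsPartialLift.sUnion {c : Set (Set (Σ a, X a))} (hc : IsChain (· ⊆ ·) c)
    (hne : c.Nonempty) (h : ∀ G ∈ c, IsPartialLift r C z G) : IsPartialLift r C z (⋃₀ c) where
  injOn_fst := by
    rw [injOn_iff_pairwise_ne, hc.pairwise_sUnion]
    exact fun G hG => injOn_iff_pairwise_ne.1 (h G hG).injOn_fst
  mem_of_rel := by
    rintro p ⟨G, hG, hp⟩ b hb
    obtain ⟨q, hq, rfl⟩ := (h G hG).mem_of_rel p hp b hb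
    exact ⟨q, ⟨G, hG, hq⟩, rfl⟩
  neBot := by
    have : Nonempty c := hne.to_subtype
    rw [sectionNhds, iInf_sUnion, iInf_subtype', prod_iInf_left, iInf_inf]
    refine iInf_neBot_of_directed' ?_ fun G => (h G G.2).neBot
    rintro ⟨G₁, h₁⟩ ⟨G₂, h₂⟩
    obtain ⟨G, hG, hG₁, hG₂⟩ := hc.directedOn G₁ h₁ G₂ h₂
    have mono {H : Set (Σ a, X a)} (hH : H ⊆ G) :
        sectionNhds G ×ˢ 𝓝 z ⊓ 𝓟 C ≤ sectionNhds H ×ˢ 𝓝 z ⊓ 𝓟 C :=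
      inf_le_inf_right _ (prod_mono_left _ (sectionNhds_antitone hH))
    exact ⟨⟨G, hG⟩, mono hG₁, mono hG₂⟩

theorem IsPartialLift.exists_mem {G : Set (Σ a, X a)} (hG : IsPartialLift r C z G)
    (hC : IsClosed C) (hdom : Sigma.fst '' G = univ) : ∃ x, (x, z) ∈ C := by
  have : ∀ a, ∃ v, (⟨a, v⟩ : Σ a, X a) ∈ G := fun a => by
    obtain ⟨p, hp, rfl⟩ := hdom.symm ▸ mem_univ a
    exact ⟨p.2, hp⟩
  choose x hx using this
  have hle : sectionNhds G ×ˢ 𝓝 z ≤ 𝓝 (x, z) := by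
    rw [nhds_prod_eq]
    exact prod_mono_left _ (sectionNhds_le_nhds hx)
  have : ClusterPt (x, z) (𝓟 C) := hG.neBot.mono (inf_le_inf_right _ hle)
  exact ⟨x, hC.closure_eq ▸ mem_closure_iff_clusterPt.2 this⟩

theorem IsPartialLift.exists_insert {G : Set (Σ a, X a)} (hG : IsPartialLift r C z G) {a : A}
    (ha : a ∉ Sigma.fst '' G) (hlt : ∀ b, r b a → b ∈ Sigma.fst '' G)
    (hclosed : IsClosedMap
      (Prod.snd : X a × ((∀ b : Sigma.fst '' G, X b) × Z) → (∀ b : Sigma.fst '' G, X b) × Z)) :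
    ∃ t, IsPartialLift r C z (insert ⟨a, t⟩ G) := by
  set s := Sigma.fst '' G
  obtain ⟨x, hx⟩ := exists_range_eq_of_injOn_fst hG.injOn_fst
  let q : (∀ a, X a) × Z → (∀ b : s, X b) × Z := fun c => (s.domRestrict c.1, c.2)
  let p : (∀ a, X a) × Z → X a × ((∀ b : s, X b) × Z) := fun c => (c.1 a, q c)
  have hGq : sectionNhds G ×ˢ 𝓝 z = comap q (𝓝 (x, z)) := by
    rw [← hx, sectionNhds_range]
    simp only [nhds_prod_eq, prod_eq_inf, comap_inf, comap_comap]
    rfl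
  have hGp (t : X a) : sectionNhds (insert ⟨a, t⟩ G) ×ˢ 𝓝 z = comap p (𝓝 (t, x, z)) := by
    rw [sectionNhds_insert, ← hx, sectionNhds_range]
    simp only [nhds_prod_eq, prod_eq_inf, comap_inf, comap_comap, inf_assoc]
    rfl
  have hq : (x, z) ∈ closure (q '' C) := by
    rw [← neBot_comap_nhds_inf_principal_iff, ← hGq]
    exact hG.neBot
  have hsub : q '' C ⊆ Prod.snd '' closure (p '' C) := by
    rintro _ ⟨c, hc, rfl⟩
    exact ⟨p c, subset_closure (mem_image_of_mem p hc), rfl⟩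
  obtain ⟨⟨t, w⟩, ht, rfl⟩ := (hclosed _ isClosed_closure).closure_subset_iff.2 hsub hq
  refine ⟨t, ⟨?_, ?_, ?_⟩⟩
  · exact (injOn_insert fun h => ha ⟨_, h, rfl⟩).2 ⟨hG.injOn_fst, ha⟩
  · rintro p (rfl | hp) b hb
    · obtain ⟨q, hq, rfl⟩ := hlt b hb
      exact ⟨q, mem_insert_of_mem _ hq, rfl⟩
    · obtain ⟨q, hq, rfl⟩ := hG.mem_of_rel p hp b hb
      exact ⟨q, mem_insert_of_mem _ hq, rfl⟩
  · rw [hGp, neBot_comap_nhds_inf_principal_iff]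
    exact ht

theorem isClosedMap_snd_pi_of_wellOrder (r : A → A → Prop) [IsWellOrder A r]
    (h : ∀ a (s : Set A), s ⊆ {b | r b a} →
      IsClosedMap (Prod.snd : X a × ((∀ b : s, X b) × Z) → (∀ b : s, X b) × Z)) :
    IsClosedMap (Prod.snd : (∀ a, X a) × Z → Z) := by
  intro C hC
  refine isClosed_of_closure_subset fun z hz => ?_
  obtain ⟨m, -, hm⟩ := zorn_subset_nonempty {G | IsPartialLift r C z G}
    (fun c hcS hc hne => ⟨⋃₀ c, .sUnion hc hne hcS, fun _ => subset_sUnion_of_mem⟩)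
    ∅ (isPartialLift_empty hz)
  by_cases hdom : Sigma.fst '' m = univ
  · obtain ⟨x, hx⟩ := hm.prop.exists_mem hC hdom
    exact ⟨(x, z), hx, rfl⟩
  have hcompl : (Sigma.fst '' m)ᶜ.Nonempty := nonempty_compl.2 hdom
  set a := (IsWellFounded.wf (r := r)).min _ hcompl
  have ha : a ∉ Sigma.fst '' m := (IsWellFounded.wf (r := r)).min_mem _ hcompl
  have hlt : ∀ b, r b a → b ∈ Sigma.fst '' m := fun b hb =>
    not_not.1 fun hb' => (IsWellFounded.wf (r := r)).not_lt_min _ hb' hb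
  have hsub : Sigma.fst '' m ⊆ {b | r b a} := by
    rintro _ ⟨p, hp, rfl⟩
    rcases trichotomous_of r p.1 a with hpa | hpa | hap
    · exact hpa
    · exact absurd ⟨p, hp, hpa⟩ ha
    · exact absurd (hm.prop.mem_of_rel p hp a hap) ha
  obtain ⟨t, ht⟩ := hm.prop.exists_insert ha hlt (h a _ hsub)
  have hat : ⟨a, t⟩ ∈ m := (hm.eq_of_le ht (subset_insert _ _)).symm ▸ mem_insert _ m
  exact (ha ⟨_, hat, rfl⟩).elim

end PartialLift

theorem stmt_10 (κ : Cardinal.{u}) (hκ : Cardinal.aleph0 ≤ κ) (R : Set TopCat.{u})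
    (hR : ∀ (ι : Type u) (Y : ι → TopCat.{u}), Cardinal.mk ι < κ →
      (∀ i, Y i ∈ R) → TopCat.of (∀ i, ↑(Y i)) ∈ R)
    (A : Type u) (X : A → TopCat.{u})
    (hXP : ∀ a, ∀ Z ∈ R, IsClosedMap (Prod.snd : ↑(X a) × ↑Z → ↑Z))
    (hXR : ∀ a, X a ∈ R) (hA : Cardinal.mk A = κ) :
    ∀ Z ∈ R, IsClosedMap (Prod.snd : (∀ a, ↑(X a)) × ↑Z → ↑Z) := by
  intro Z hZ
  obtain ⟨r, _, hr⟩ := Cardinal.exists_ord_eq A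
  refine isClosedMap_snd_pi_of_wellOrder r fun a s hs => ?_
  let Y : Option s → TopCat.{u} := fun i => i.elim Z fun b => X b
  have hcard : Cardinal.mk s < κ := calc
    Cardinal.mk s ≤ Cardinal.mk {b | r b a} := Cardinal.mk_le_mk_of_subset hs
    _ = (Ordinal.typein r a).card := rfl
    _ < Cardinal.mk A := Cardinal.card_typein_lt a hr
    _ = κ := hA
  have hY : TopCat.of (∀ i, ↑(Y i)) ∈ R := by
    refine hR _ Y ?_ fun i => Option.rec hZ (fun b => hXR b) i
    rw [Cardinal.mk_option]
    exact Cardinal.add_lt_of_lt hκ hcard (Cardinal.one_lt_aleph0.trans_le hκ)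
  exact (hXP a _ hY).snd_of_homeomorph
    ((Homeomorph.piOptionEquivProd fun i => ↑(Y i)).trans (Homeomorph.prodComm _ _))
end

section
/- Let κ be an infinite cardinal, X and Y topological spaces. Suppose X has an open cover {U_α : α < κ} with no subcover of cardinality less than κ, and Y contains an increasing (with respect to the ordinal index) family {H_α : α < κ} of closed sets whose union is not closed. Then the projection π_Y : X × Y → Y is not a closed map. -/
/-!
Let `F α` be the set of points of `X` not covered by the `U β` with `β < α`. Since no proper
initial segment of the cover covers `X`, every `F α` is nonempty, so the closed set
`S = ⋃ α, F α ×ˢ H α` projects onto `⋃ α, H α`, which is not closed. `S` is closed because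
near a point `(x, y) ∉ S`, with `γ` least such that `x ∈ U γ`, the open box `U γ ×ˢ (H γ)ᶜ`
only meets the pieces with `α ≤ γ`, all of which lie in `X × H γ` by monotonicity.
-/

open Set

section WellOrdered

variable {ι X Y : Type*} [LinearOrder ι] [WellFoundedLT ι]
  [TopologicalSpace X] [TopologicalSpace Y]

theorem isClosed_iUnion_compl_biUnion_Iio_prod {U : ι → Set X} (hUopen : ∀ α, IsOpen (U α))
    (hUcover : ⋃ α, U α = univ) {H : ι → Set Y} (hHclosed : ∀ α, IsClosed (H α))
    (hHmono : Monotone H) :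
    IsClosed (⋃ α, (⋃ β ∈ Iio α, U β)ᶜ ×ˢ H α) := by
  rw [← isOpen_compl_iff, isOpen_iff_forall_mem_open]
  rintro ⟨x, y⟩ hxy
  have hx : {α | x ∈ U α}.Nonempty := mem_iUnion.1 (hUcover ▸ mem_univ x)
  obtain ⟨γ, hxγ, hγmin⟩ := wellFounded_lt.has_min _ hx
  have hyγ : y ∉ H γ := fun hy => hxy <| mem_iUnion.2
    ⟨γ, by simpa using fun β hβ hxβ => hγmin β hxβ hβ, hy⟩
  refine ⟨U γ ×ˢ (H γ)ᶜ, ?_, (hUopen γ).prod (hHclosed γ).isOpen_compl, hxγ, hyγ⟩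
  rintro ⟨x', y'⟩ ⟨hx', hy'⟩ hmem
  obtain ⟨α, hFα, hHα⟩ := mem_iUnion.1 hmem
  have hαγ : α ≤ γ := not_lt.1 fun hγα => hFα (mem_biUnion hγα hx')
  exact hy' (hHmono hαγ hHα)

theorem not_isClosedMap_snd_of_wellOrdered_cover {U : ι → Set X} (hUopen : ∀ α, IsOpen (U α))
    (hUcover : ⋃ α, U α = univ) (hUno : ∀ α, ⋃ β ∈ Iio α, U β ≠ univ)
    {H : ι → Set Y} (hHclosed : ∀ α, IsClosed (H α)) (hHmono : Monotone H)
    (hHunion : ¬ IsClosed (⋃ α, H α)) :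
    ¬ IsClosedMap (Prod.snd : X × Y → Y) := by
  intro hsnd
  have himage : Prod.snd '' ⋃ α, (⋃ β ∈ Iio α, U β)ᶜ ×ˢ H α = ⋃ α, H α := by
    simp only [image_iUnion, snd_image_prod (nonempty_compl.2 (hUno _))]
  exact hHunion <| himage ▸
    hsnd _ (isClosed_iUnion_compl_biUnion_Iio_prod hUopen hUcover hHclosed hHmono)

end WellOrdered

theorem Cardinal.mk_Iio_lt_lift_of_lt_ord {κ : Cardinal.{v}} (α : Iio κ.ord) :
    Cardinal.mk (Iio α) < Cardinal.lift.{v + 1} κ := by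
  have hinj : Function.Injective fun β : Iio α => (⟨β.1.1, β.2⟩ : Iio α.1) :=
    fun β β' h => Subtype.ext <| Subtype.ext (congrArg Subtype.val h :)
  calc Cardinal.mk (Iio α) ≤ Cardinal.mk (Iio α.1) := Cardinal.mk_le_of_injective hinj
    _ = Cardinal.lift.{v + 1} α.1.card := Cardinal.mk_Iio_ordinal _
    _ < Cardinal.lift.{v + 1} κ := Cardinal.lift_lt.2 (Cardinal.lt_ord.1 α.2)

theorem stmt_11_general (κ : Cardinal.{v})
    {X Y : Type*} [TopologicalSpace X] [TopologicalSpace Y]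
    (U : Set.Iio κ.ord → Set X) (hUopen : ∀ α, IsOpen (U α))
    (hUcover : ⋃ α, U α = Set.univ)
    (hUno : ∀ s : Set (Set.Iio κ.ord),
      Cardinal.mk s < Cardinal.lift.{v + 1} κ → ⋃ α ∈ s, U α ≠ Set.univ)
    (H : Set.Iio κ.ord → Set Y) (hHclosed : ∀ α, IsClosed (H α))
    (hHmono : Monotone H) (hHunion : ¬ IsClosed (⋃ α, H α)) :
    ¬ IsClosedMap (Prod.snd : X × Y → Y) :=
  not_isClosedMap_snd_of_wellOrdered_cover hUopen hUcover
    (fun α => hUno _ (Cardinal.mk_Iio_lt_lift_of_lt_ord α)) hHclosed hHmono hHunion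

theorem stmt_11 (κ : Cardinal.{v}) (hκ : Cardinal.aleph0 ≤ κ)
    {X Y : Type*} [TopologicalSpace X] [TopologicalSpace Y]
    (U : Set.Iio κ.ord → Set X) (hUopen : ∀ α, IsOpen (U α))
    (hUcover : ⋃ α, U α = Set.univ)
    (hUno : ∀ s : Set (Set.Iio κ.ord),
      Cardinal.mk s < Cardinal.lift.{v + 1} κ → ⋃ α ∈ s, U α ≠ Set.univ)
    (H : Set.Iio κ.ord → Set Y) (hHclosed : ∀ α, IsClosed (H α))
    (hHmono : Monotone H) (hHunion : ¬ IsClosed (⋃ α, H α)) :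
    ¬ IsClosedMap (Prod.snd : X × Y → Y) :=
  stmt_11_general κ U hUopen hUcover hUno H hHclosed hHmono hHunion
end

section
/- Let κ be an infinite cardinal. If X is [κ,∞]-compact (every open cover of X has a subcover of cardinality less than κ) and Y is a space in which every intersection of fewer than κ open sets is open, then the projection π_Y : X × Y → Y is a closed map. -/
/-!
A generalized tube lemma: if `X × {y}` lies in an open set `W`, cover `X` by the `X`-sides of
basic boxes inside `W` around the points `(x, y)`; fewer than `κ` of them suffice, and the
intersection of the matching `Y`-sides is an open neighbourhood `V` of `y` with `X × V ⊆ W`.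
Applied to the complement of a closed set `C`, this shows that the complement of `π_Y(C)` is open.
-/

open Set

universe u

theorem exists_isOpen_univ_prod_subset (κ : Cardinal.{u})
    {X Y : Type u} [TopologicalSpace X] [TopologicalSpace Y]
    (hX : ∀ (ι : Type u) (U : ι → Set X), (∀ i, IsOpen (U i)) → ⋃ i, U i = univ →
      ∃ s : Set ι, Cardinal.mk s < κ ∧ ⋃ i ∈ s, U i = univ)
    (hY : ∀ (ι : Type u) (V : ι → Set Y), Cardinal.mk ι < κ → (∀ i, IsOpen (V i)) →
      IsOpen (⋂ i, V i))
    {W : Set (X × Y)} (hW : IsOpen W) {y : Y} (hy : ∀ x, (x, y) ∈ W) :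
    ∃ V : Set Y, IsOpen V ∧ y ∈ V ∧ univ ×ˢ V ⊆ W := by
  have box : ∀ x, ∃ U V, IsOpen U ∧ IsOpen V ∧ x ∈ U ∧ y ∈ V ∧ U ×ˢ V ⊆ W :=
    fun x => isOpen_prod_iff.mp hW x y (hy x)
  choose U V hU hV hxU hyV hUV using box
  obtain ⟨s, hs, hcover⟩ := hX X U hU (iUnion_eq_univ_iff.2 fun x => ⟨x, hxU x⟩)
  refine ⟨⋂ i : s, V i, hY s _ hs (fun i => hV i), mem_iInter.2 fun i => hyV i, ?_⟩
  rintro ⟨x', y'⟩ ⟨-, hy'⟩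
  obtain ⟨i, his, hxi⟩ := mem_iUnion₂.1 (hcover.symm ▸ mem_univ x')
  exact hUV i ⟨hxi, mem_iInter.1 hy' ⟨i, his⟩⟩

theorem stmt_12_general (κ : Cardinal.{u})
    {X Y : Type u} [TopologicalSpace X] [TopologicalSpace Y]
    (hX : ∀ (ι : Type u) (U : ι → Set X), (∀ i, IsOpen (U i)) → ⋃ i, U i = Set.univ →
      ∃ s : Set ι, Cardinal.mk s < κ ∧ ⋃ i ∈ s, U i = Set.univ)
    (hY : ∀ (ι : Type u) (V : ι → Set Y), Cardinal.mk ι < κ → (∀ i, IsOpen (V i)) →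
      IsOpen (⋂ i, V i)) :
    IsClosedMap (Prod.snd : X × Y → Y) := by
  intro C hC
  rw [← isOpen_compl_iff, isOpen_iff_forall_mem_open]
  intro y hy
  obtain ⟨V, hV, hyV, hVC⟩ := exists_isOpen_univ_prod_subset κ hX hY hC.isOpen_compl
    (y := y) fun x hx => hy ⟨_, hx, rfl⟩
  refine ⟨V, ?_, hV, hyV⟩
  rintro _ hy' ⟨p, hpC, rfl⟩
  exact hVC ⟨mem_univ p.1, hy'⟩ hpC

theorem stmt_12 (κ : Cardinal.{u}) (hκ : Cardinal.aleph0 ≤ κ)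
    {X Y : Type u} [TopologicalSpace X] [TopologicalSpace Y]
    (hX : ∀ (ι : Type u) (U : ι → Set X), (∀ i, IsOpen (U i)) → ⋃ i, U i = Set.univ →
      ∃ s : Set ι, Cardinal.mk s < κ ∧ ⋃ i ∈ s, U i = Set.univ)
    (hY : ∀ (ι : Type u) (V : ι → Set Y), Cardinal.mk ι < κ → (∀ i, IsOpen (V i)) →
      IsOpen (⋂ i, V i)) :
    IsClosedMap (Prod.snd : X × Y → Y) :=
  stmt_12_general κ hX hY
end

section
/- If X is a Lindelöf space and Y is a P-space (countable intersections of open sets are open), then the projection π_Y : X × Y → Y is a closed map. -/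
/-! In a P-space every neighbourhood filter is closed under countable intersections, so the
tube lemma of the compact case goes through with a countable subcover of the Lindelöf factor in
place of a finite one: if `X × {y}` misses the closed set `F`, countably many boxes cover
`X × {y}` inside `Fᶜ`, and the intersection of their `Y`-sides is a neighbourhood of `y` whose
tube misses `F`. -/

open Filter Set Topology

theorem countableInterFilter_nhds_of_isOpen_iInter {Y : Type*} [TopologicalSpace Y]
    (hY : ∀ V : ℕ → Set Y, (∀ n, IsOpen (V n)) → IsOpen (⋂ n, V n)) (y : Y) :
    CountableInterFilter (𝓝 y) := by
  refine ⟨fun S hSc hS => ?_⟩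
  rcases S.eq_empty_or_nonempty with rfl | hne
  · simp
  obtain ⟨V, rfl⟩ := hSc.exists_eq_range hne
  have hopen : IsOpen (⋂ n, interior (V n)) := hY _ fun _ => isOpen_interior
  have hy : y ∈ ⋂ n, interior (V n) :=
    mem_iInter.2 fun n => mem_interior_iff_mem_nhds.2 (hS _ (mem_range_self n))
  refine mem_of_superset (hopen.mem_nhds hy) ?_
  rw [sInter_range]
  exact iInter_mono fun _ => interior_subset

theorem IsLindelof.eventually_forall_of_forall_eventually {X Y : Type*} [TopologicalSpace X]
    [TopologicalSpace Y] {K : Set X} (hK : IsLindelof K) {y₀ : Y} [CountableInterFilter (𝓝 y₀)]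
    {P : X → Y → Prop} (hP : ∀ x ∈ K, ∀ᶠ z : X × Y in 𝓝 (x, y₀), P z.1 z.2) :
    ∀ᶠ y in 𝓝 y₀, ∀ x ∈ K, P x y := by
  refine hK.induction_on (p := fun t => ∀ᶠ y in 𝓝 y₀, ∀ x ∈ t, P x y) ?_ ?_ ?_
  · exact fun s t hst ht => ht.mono fun y hy x hx => hy x (hst hx)
  · intro S hSc hS
    filter_upwards [(eventually_countable_ball hSc).2 hS] with y hy x ⟨t, ht, hxt⟩
    exact hy t ht x hxt
  · intro x hx
    obtain ⟨U, hU, V, hV, hUV⟩ := mem_nhds_prod_iff.1 (hP x hx)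
    exact ⟨U, mem_nhdsWithin_of_mem_nhds hU,
      mem_of_superset hV fun y hy x' hx' => hUV (mk_mem_prod hx' hy)⟩

theorem stmt_13 {X Y : Type*} [TopologicalSpace X] [TopologicalSpace Y]
    [LindelofSpace X]
    (hY : ∀ V : ℕ → Set Y, (∀ n, IsOpen (V n)) → IsOpen (⋂ n, V n)) :
    IsClosedMap (Prod.snd : X × Y → Y) := by
  have := countableInterFilter_nhds_of_isOpen_iInter hY
  intro F hF
  refine isOpen_compl_iff.mp (isOpen_iff_eventually.mpr fun y hy => ?_)
  have hnhds : ∀ x ∈ univ, ∀ᶠ z in 𝓝 (x, y), z ∉ F := fun x _ =>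
    hF.isOpen_compl.mem_nhds fun hxy => hy ⟨_, hxy, rfl⟩
  filter_upwards [isLindelof_univ.eventually_forall_of_forall_eventually
    (P := fun x y' => (x, y') ∉ F) hnhds]
    with y' hy' ⟨⟨x, _⟩, hxF, rfl⟩ using hy' x trivial hxF
end

section
/- If X is a Lindelöf space that is not compact and Y is a topological space that is not a P-space (there is a countable family of open sets whose intersection is not open), then the projection π_Y : X × Y → Y is not a closed map. -/
/-!
If `X` is Lindelöf but not compact, it has an increasing open cover `W₀ ⊆ W₁ ⊆ ⋯` with no
`Wₙ = X`. Given open sets `G₀ ⊇ G₁ ⊇ ⋯` in `Y`, the set of pairs `(x, y)` with `x ∉ Wₙ` whenever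
`y ∈ Gₙ` is closed in `X × Y`, and its projection to `Y` is exactly the complement of `⋂ Gₙ`.
So if the projection is a closed map, every countable intersection of open sets in `Y` is open.
-/

open Set

section

variable {X Y : Type*} [TopologicalSpace X] [TopologicalSpace Y]

theorem exists_monotone_open_cover_ne_univ [LindelofSpace X]
    (hX : ¬ CompactSpace X) :
    ∃ W : ℕ → Set X, (∀ n, IsOpen (W n)) ∧ Monotone W ∧ ⋃ n, W n = univ ∧ ∀ n, W n ≠ univ := by
  have hnc : ¬ IsCompact (univ : Set X) := fun h => hX ⟨h⟩
  rw [isCompact_iff_finite_subcover] at hnc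
  push Not at hnc
  obtain ⟨ι, U, hUo, hUcov, hfin⟩ := hnc
  have : Nonempty X := not_isEmpty_iff.mp fun _ => hX inferInstance
  have : Nonempty ι := by
    obtain ⟨i, -⟩ := mem_iUnion.mp (hUcov (mem_univ (Classical.arbitrary X)))
    exact ⟨i⟩
  obtain ⟨f, hf⟩ := isLindelof_univ.indexed_countable_subcover U hUo hUcov
  refine ⟨accumulate (U ∘ f), fun n => isOpen_biUnion fun k _ => hUo (f k), monotone_accumulate,
    univ_subset_iff.mp (by rwa [iUnion_accumulate]), fun n hn => ?_⟩
  classical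
  refine hfin ((Finset.range (n + 1)).image f) fun x _ => ?_
  obtain ⟨k, hk, hx⟩ := mem_accumulate.mp (hn ▸ mem_univ x)
  exact mem_biUnion (Finset.mem_image_of_mem f (Finset.mem_range.mpr (Nat.lt_succ_of_le hk))) hx

theorem isOpen_iInter_of_antitone_of_isClosedMap_snd {W : ℕ → Set X} (hWo : ∀ n, IsOpen (W n))
    (hWmono : Monotone W) (hWcov : ⋃ n, W n = univ) (hW : ∀ n, W n ≠ univ)
    (hsnd : IsClosedMap (Prod.snd : X × Y → Y)) {G : ℕ → Set Y} (hGo : ∀ n, IsOpen (G n))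
    (hG : Antitone G) : IsOpen (⋂ n, G n) := by
  set A : Set (X × Y) := {p | ∀ n, p.2 ∈ G n → p.1 ∉ W n}
  have hA : IsClosed A := by
    have : A = ⋂ n, (Prod.snd ⁻¹' G n ∩ Prod.fst ⁻¹' W n)ᶜ := by
      ext p
      simp [A]
    rw [this]
    exact isClosed_iInter fun n =>
      (((hGo n).preimage continuous_snd).inter ((hWo n).preimage continuous_fst)).isClosed_compl
  have himage : Prod.snd '' A = (⋂ n, G n)ᶜ := by
    ext y
    simp only [mem_image, Prod.exists, exists_eq_right, mem_ofPred_eq, A, mem_compl_iff,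
      mem_iInter, not_forall]
    constructor
    · rintro ⟨x, hx⟩
      by_contra! hy
      obtain ⟨n, hn⟩ := mem_iUnion.mp (hWcov ▸ mem_univ x)
      exact hx n (hy n) hn
    · rintro ⟨m, hm⟩
      obtain ⟨x, hx⟩ := (ne_univ_iff_exists_notMem (W m)).mp (hW m)
      refine ⟨x, fun n hy hxn => ?_⟩
      rcases le_total n m with hnm | hmn
      · exact hx (hWmono hnm hxn)
      · exact hm (hG hmn hy)
  rw [← isClosed_compl_iff, ← himage]
  exact hsnd A hA

theorem isOpen_iInter_of_isClosedMap_snd [LindelofSpace X] (hX : ¬ CompactSpace X)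
    (hsnd : IsClosedMap (Prod.snd : X × Y → Y)) {V : ℕ → Set Y} (hVo : ∀ n, IsOpen (V n)) :
    IsOpen (⋂ n, V n) := by
  obtain ⟨W, hWo, hWmono, hWcov, hW⟩ := exists_monotone_open_cover_ne_univ hX
  have hpartial : ⋂ n, ⋂ k ≤ n, V k = ⋂ n, V n := by
    ext y
    simp only [mem_iInter]
    exact ⟨fun h n => h n n le_rfl, fun h n k _ => h k⟩
  rw [← hpartial]
  exact isOpen_iInter_of_antitone_of_isClosedMap_snd hWo hWmono hWcov hW hsnd
    (fun n => (finite_Iic n).isOpen_biInter fun k _ => hVo k)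
    (fun m n hmn => biInter_subset_biInter_left fun k hk => le_trans hk hmn)

end

theorem stmt_14 {X Y : Type*} [TopologicalSpace X] [TopologicalSpace Y]
    [LindelofSpace X] (hX : ¬ CompactSpace X)
    (hY : ∃ V : ℕ → Set Y, (∀ n, IsOpen (V n)) ∧ ¬ IsOpen (⋂ n, V n)) :
    ¬ IsClosedMap (Prod.snd : X × Y → Y) := by
  obtain ⟨V, hVo, hV⟩ := hY
  exact fun hsnd => hV (isOpen_iInter_of_isClosedMap_snd hX hsnd hVo)
end

section
/- Let κ be an infinite cardinal and let Y = ∏_{α<κ} Y_α be a product of topological spaces each of which contains a nonempty proper closed subset. If X is a topological space such that the projection π_Y : X × Y → Y is a closed map, then X is initially κ-compact: every open cover of X of cardinality at most κ has a finite subcover. -/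
/-!
Suppose an open cover `U` of `X`, indexed by `ι` with `#ι ≤ κ`, has no finite subcover, and
inject `ι` into the index set `Iio κ.ord` of the product by `f`. In each factor pick a nonempty
proper closed set `C α`. The pairs `(x, y)` with `y (f i) ∈ C (f i)` whenever `x ∈ U i` form a
closed set. A point `q` with `q α ∉ C α` for all `α` is not in its projection, since every `x`
lies in some `U i`; but every basic neighbourhood of `q` constrains only finitely many
coordinates, and a point `x` outside the corresponding finitely many `U i` shows that the
neighbourhood meets the projection. So the projection is not closed.
-/

open Set

section CoverConstraint

variable {X ι J : Type*} {Y : J → Type*}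

def coverConstraintSet (U : ι → Set X) (f : ι → J) (C : ∀ j, Set (Y j)) :
    Set (X × ∀ j, Y j) :=
  {z | ∀ i, z.1 ∈ U i → z.2 (f i) ∈ C (f i)}

lemma isClosed_coverConstraintSet [TopologicalSpace X] [∀ j, TopologicalSpace (Y j)]
    {U : ι → Set X} (hU : ∀ i, IsOpen (U i)) (f : ι → J) {C : ∀ j, Set (Y j)}
    (hC : ∀ j, IsClosed (C j)) : IsClosed (coverConstraintSet U f C) := by
  have : coverConstraintSet U f C =
      ⋂ i, (U i)ᶜ ×ˢ univ ∪ univ ×ˢ ((fun y : ∀ j, Y j => y (f i)) ⁻¹' C (f i)) := by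
    ext z
    simp only [coverConstraintSet, mem_ofPred_eq, mem_iInter, mem_union, mem_prod, mem_compl_iff,
      mem_univ, mem_preimage, and_true, true_and, imp_iff_not_or]
  rw [this]
  exact isClosed_iInter fun i =>
    ((hU i).isClosed_compl.prod isClosed_univ).union
      (isClosed_univ.prod ((hC (f i)).preimage (continuous_apply (f i))))

lemma notMem_snd_image_coverConstraintSet {U : ι → Set X} (hcov : ⋃ i, U i = univ) (f : ι → J)
    {C : ∀ j, Set (Y j)} {q : ∀ j, Y j} (hq : ∀ j, q j ∉ C j) :
    q ∉ Prod.snd '' coverConstraintSet U f C := by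
  rintro ⟨⟨x, y⟩, hxy, rfl⟩
  obtain ⟨i, hxi⟩ := mem_iUnion.1 (hcov ▸ mem_univ x)
  exact hq (f i) (hxy i hxi)

lemma mem_closure_snd_image_coverConstraintSet [∀ j, TopologicalSpace (Y j)] {U : ι → Set X}
    (hU : ∀ t : Finset ι, ⋃ i ∈ t, U i ≠ univ) (f : ι ↪ J) {C : ∀ j, Set (Y j)}
    (hC : ∀ j, (C j).Nonempty) (q : ∀ j, Y j) :
    q ∈ closure (Prod.snd '' coverConstraintSet U f C) := by
  classical
  rw [mem_closure_iff]
  intro W hW hqW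
  obtain ⟨I, u, hu, hIW⟩ := isOpen_pi_iff.1 hW q hqW
  obtain ⟨x, hx⟩ := nonempty_compl.2 (hU (I.preimage f f.injective.injOn))
  simp only [mem_compl_iff, mem_iUnion, Finset.mem_preimage, not_exists] at hx
  let y : ∀ j, Y j := fun j => if j ∈ I then q j else (hC j).some
  refine ⟨y, hIW fun j hj => ?_, (x, y), fun i hxi => ?_, rfl⟩
  · simpa [y, Finset.mem_coe.1 hj] using (hu j hj).2
  · have hfi : f i ∉ I := fun hfi => hx i hfi hxi
    simpa [y, hfi] using (hC (f i)).some_mem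

theorem exists_finset_iUnion_eq_univ_of_isClosedMap_snd [TopologicalSpace X]
    [∀ j, TopologicalSpace (Y j)] (hY : ∀ j, ∃ C : Set (Y j), C.Nonempty ∧ C ≠ univ ∧ IsClosed C)
    (h : IsClosedMap (Prod.snd : X × (∀ j, Y j) → ∀ j, Y j)) (f : ι ↪ J) {U : ι → Set X}
    (hU : ∀ i, IsOpen (U i)) (hcov : ⋃ i, U i = univ) :
    ∃ t : Finset ι, ⋃ i ∈ t, U i = univ := by
  by_contra! hfin
  choose C hCne hCne_univ hCclosed using hY
  choose q hq using fun j => (ne_univ_iff_exists_notMem _).1 (hCne_univ j)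
  have hclosed := h _ (isClosed_coverConstraintSet hU f hCclosed)
  exact notMem_snd_image_coverConstraintSet hcov f hq
    (hclosed.closure_subset (mem_closure_snd_image_coverConstraintSet hfin f hCne q))

end CoverConstraint

lemma Cardinal.nonempty_embedding_Iio_ord {ι : Type*} {κ : Cardinal} (h : Cardinal.mk ι ≤ κ) :
    Nonempty (ι ↪ Iio κ.ord) := by
  rw [← Cardinal.lift_mk_le', Cardinal.mk_Iio_ordinal, Cardinal.card_ord, Cardinal.lift_lift]
  exact Cardinal.lift_le.2 h

theorem stmt_15_general (κ : Cardinal)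
    {X : Type*} [TopologicalSpace X]
    (Y : Set.Iio κ.ord → Type*) [∀ α, TopologicalSpace (Y α)]
    (hY : ∀ α, ∃ C : Set (Y α), C.Nonempty ∧ C ≠ Set.univ ∧ IsClosed C)
    (h : IsClosedMap (Prod.snd : X × (∀ α, Y α) → ∀ α, Y α)) :
    ∀ (ι : Type*) (U : ι → Set X), Cardinal.mk ι ≤ κ → (∀ i, IsOpen (U i)) →
      ⋃ i, U i = Set.univ → ∃ t : Finset ι, ⋃ i ∈ t, U i = Set.univ := by
  intro ι U hι hU hcov
  obtain ⟨f⟩ := Cardinal.nonempty_embedding_Iio_ord hι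
  exact exists_finset_iUnion_eq_univ_of_isClosedMap_snd hY h f hU hcov

theorem stmt_15 (κ : Cardinal) (hκ : Cardinal.aleph0 ≤ κ)
    {X : Type*} [TopologicalSpace X]
    (Y : Set.Iio κ.ord → Type*) [∀ α, TopologicalSpace (Y α)]
    (hY : ∀ α, ∃ C : Set (Y α), C.Nonempty ∧ C ≠ Set.univ ∧ IsClosed C)
    (h : IsClosedMap (Prod.snd : X × (∀ α, Y α) → ∀ α, Y α)) :
    ∀ (ι : Type*) (U : ι → Set X), Cardinal.mk ι ≤ κ → (∀ i, IsOpen (U i)) →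
      ⋃ i, U i = Set.univ → ∃ t : Finset ι, ⋃ i ∈ t, U i = Set.univ :=
  stmt_15_general κ Y hY h
end

section
/- Let κ be an infinite cardinal and Y = ∏_{α<κ} Y_α where each Y_α contains a nonempty proper closed subset C_α. For α < κ set H_α = ∏_{β≤α} Y_β × ∏_{α<β<κ} C_β. Then for every infinite cardinal λ ≤ κ, the family {H_α : α < λ} is an increasing family of closed subsets of Y whose union is not closed. -/
/-! The sets `H α` are closed boxes, and they grow with `α` because fewer coordinates are
constrained. Pick `d β ∉ C β` and `c β ∈ C β`. The point equal to `d` below `λ` and to `c`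
from `λ` on lies in no `H α` with `α < λ`, since `λ` is a limit. It is nevertheless the
limit, as `s → λ`, of the points equal to `d` up to `s` and to `c` above `s`, which lie in
`H s`: each coordinate of these points is eventually constant. -/

open Set Filter Topology

section TailBox

variable {ι : Type*} [LinearOrder ι] {Y : ι → Type*}

theorem monotone_pi_Ioi (C : ∀ i, Set (Y i)) : Monotone fun α : ι => (Ioi α).pi C :=
  fun _ _ hab => pi_mono' (fun _ _ => Subset.rfl) (Ioi_subset_Ioi hab)

variable [∀ i, TopologicalSpace (Y i)]

theorem isClosed_pi_Ioi {C : ∀ i, Set (Y i)} (hC : ∀ i, IsClosed (C i)) (α : ι) :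
    IsClosed ((Ioi α).pi C) :=
  isClosed_set_pi fun i _ => hC i

theorem tendsto_piecewise_Iic_atTop {S : Set ι} [DecidablePred (· ∈ S)] (hS : IsLowerSet S)
    (d c : ∀ i, Y i) :
    Tendsto (fun s : S => (Iic (s : ι)).piecewise d c) atTop (𝓝 (S.piecewise d c)) := by
  refine tendsto_pi_nhds.2 fun β => tendsto_const_nhds.congr' ?_
  by_cases hβ : β ∈ S
  · filter_upwards [eventually_ge_atTop ⟨β, hβ⟩] with s hs
    have hβs : β ∈ Iic (s : ι) := Subtype.coe_le_coe.2 hs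
    rw [piecewise_eq_of_mem _ _ _ hβ, piecewise_eq_of_mem _ _ _ hβs]
  · filter_upwards with s
    have hβs : β ∉ Iic (s : ι) := fun h => hβ (hS h s.2)
    rw [piecewise_eq_of_notMem _ _ _ hβ, piecewise_eq_of_notMem _ _ _ hβs]

theorem not_isClosed_iUnion_pi_Ioi {C : ∀ i, Set (Y i)} (hne : ∀ i, (C i).Nonempty)
    (hproper : ∀ i, C i ≠ univ) {S : Set ι} (hS : IsLowerSet S) (hSne : S.Nonempty)
    (hSmax : ∀ α ∈ S, ∃ β ∈ S, α < β) :
    ¬ IsClosed (⋃ α : S, (Ioi (α : ι)).pi C) := by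
  classical
  choose c hc using hne
  choose d hd using fun i => (ne_univ_iff_exists_notMem _).1 (hproper i)
  have : Nonempty S := hSne.to_subtype
  intro hU
  have hmem : S.piecewise d c ∈ ⋃ α : S, (Ioi (α : ι)).pi C := by
    refine hU.mem_of_tendsto (tendsto_piecewise_Iic_atTop hS d c) (Eventually.of_forall ?_)
    refine fun s => mem_iUnion.2 ⟨s, fun β (hβ : (s : ι) < β) => ?_⟩
    rw [piecewise_eq_of_notMem _ _ _ (notMem_Iic.2 hβ)]
    exact hc β
  obtain ⟨α, hα⟩ := mem_iUnion.1 hmem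
  obtain ⟨β, hβS, hαβ⟩ := hSmax α α.2
  have hβ := hα β hαβ
  rw [piecewise_eq_of_mem _ _ _ hβS] at hβ
  exact hd β hβ

end TailBox

theorem stmt_16_general (κ : Cardinal)
    (Y : Set.Iio κ.ord → Type*) [∀ α, TopologicalSpace (Y α)]
    (C : ∀ α, Set (Y α)) (hne : ∀ α, (C α).Nonempty) (hproper : ∀ α, C α ≠ Set.univ)
    (hclosed : ∀ α, IsClosed (C α))
    (H : Set.Iio κ.ord → Set (∀ α, Y α))
    (hH : ∀ α, H α = {y | ∀ β, α < β → y β ∈ C β})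
    (l : Cardinal) (hl : Cardinal.aleph0 ≤ l) (hlκ : l ≤ κ) :
    (∀ α, IsClosed (H α)) ∧ Monotone H ∧
      ¬ IsClosed (⋃ α : {a : Set.Iio κ.ord // a.1 < l.ord}, H α.1) := by
  obtain rfl : H = fun α => (Ioi α).pi C := funext hH
  have hlim : Order.IsSuccLimit l.ord := Cardinal.isSuccLimit_ord hl
  have hlκ' : l.ord ≤ κ.ord := Cardinal.ord_le_ord.2 hlκ
  refine ⟨isClosed_pi_Ioi hclosed, monotone_pi_Ioi C,
    not_isClosed_iUnion_pi_Ioi (S := {a | a.1 < l.ord}) hne hproper ?_ ?_ ?_⟩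
  · exact fun a b hab ha => lt_of_le_of_lt (α := Ordinal) hab ha
  · exact ⟨⟨0, hlim.bot_lt.trans_le hlκ'⟩, hlim.bot_lt⟩
  · rintro ⟨a, -⟩ (ha : a < l.ord)
    have ha1 := hlim.add_one_lt ha
    exact ⟨⟨a + 1, ha1.trans_le hlκ'⟩, ha1, show a < a + 1 from lt_add_one a⟩

theorem stmt_16 (κ : Cardinal) (hκ : Cardinal.aleph0 ≤ κ)
    (Y : Set.Iio κ.ord → Type*) [∀ α, TopologicalSpace (Y α)]
    (C : ∀ α, Set (Y α)) (hne : ∀ α, (C α).Nonempty) (hproper : ∀ α, C α ≠ Set.univ)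
    (hclosed : ∀ α, IsClosed (C α))
    (H : Set.Iio κ.ord → Set (∀ α, Y α))
    (hH : ∀ α, H α = {y | ∀ β, α < β → y β ∈ C β})
    (l : Cardinal) (hl : Cardinal.aleph0 ≤ l) (hlκ : l ≤ κ) :
    (∀ α, IsClosed (H α)) ∧ Monotone H ∧
      ¬ IsClosed (⋃ α : {a : Set.Iio κ.ord // a.1 < l.ord}, H α.1) :=
  stmt_16_general κ Y C hne hproper hclosed H hH l hl hlκ
end
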